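/- arXiv:2505.05200 — 5 statements merged into one kernel-verified Lean document; each statement's English description precedes it below -/
import Mathlib

section
/- Let G be a weighted graph and let G̃ be any split graph of G. Then G is exact if and only if G̃ is exact. -/
open Matrix Finset

/-- The Laplacian matrix of a weighted graph given by a weight function `w`. -/
noncomputable def lapW {V : Type*} [Fintype V] [DecidableEq V] (w : V → V → ℝ) :
    Matrix V V ℝ :=
  Matrix.of fun i j => if i = j then ∑ k, w i k else -w i j

/-- `w` is a valid weight function: symmetric, zero diagonal, nonnegative. -/
def IsWeight {V : Type*} [Fintype V] (w : V → V → ℝ) : Prop :=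
  (∀ i j, w i j = w j i) ∧ (∀ i, w i i = 0) ∧ ∀ i j, 0 ≤ w i j

/-- The maximum-cut value `MC(G)`. -/
noncomputable def maxCutVal {V : Type*} [Fintype V] [DecidableEq V] (w : V → V → ℝ) : ℝ :=
  sSup {c | ∃ x : V → ℝ, (∀ i, x i = 1 ∨ x i = -1) ∧
    c = (1 / 4) * (x ⬝ᵥ (lapW w).mulVec x)}

/-- The Max-Cut SDP value `φ(G)`. -/
noncomputable def sdpVal {V : Type*} [Fintype V] [DecidableEq V] (w : V → V → ℝ) : ℝ :=
  sSup {c | ∃ X : Matrix V V ℝ, X.PosSemidef ∧ (∀ i, X i i = 1) ∧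
    c = (1 / 4) * (lapW w * X).trace}

/-- `X` is an optimal solution of the Max-Cut SDP for the weighted graph `w`. -/
def IsOptSol {V : Type*} [Fintype V] [DecidableEq V] (w : V → V → ℝ)
    (X : Matrix V V ℝ) : Prop :=
  X.PosSemidef ∧ (∀ i, X i i = 1) ∧ (1 / 4) * (lapW w * X).trace = sdpVal w

/-- The Max-Cut SDP relaxation is exact: `φ(G) = MC(G)`. -/
def IsExact {V : Type*} [Fintype V] [DecidableEq V] (w : V → V → ℝ) : Prop :=
  sdpVal w = maxCutVal w

/-- The split graph of a weighted graph `w` on `Fin n`, where vertex `i` is replaced by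
`p i` copies; copies of `i` and `j` (for `i ≠ j`) are joined by edges of weight
`w i j / (p i * p j)`, and copies of the same vertex are non-adjacent. -/
noncomputable def splitW {n : ℕ} (w : Fin n → Fin n → ℝ) (p : Fin n → ℕ) :
    (Σ i : Fin n, Fin (p i)) → (Σ i : Fin n, Fin (p i)) → ℝ :=
  fun a b => if a.1 = b.1 then 0 else w a.1 b.1 / ((p a.1 : ℝ) * (p b.1 : ℝ))

/-! For a matrix `X` with unit diagonal, `tr (L_w X) = ∑ᵢⱼ wᵢⱼ (1 - Xⱼᵢ)` when `wᵢᵢ = 0`.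
Lifting `X ↦ P X Pᵀ` (every copy of `i` gets row and column `i` of `X`) turns feasible points
for `G` into feasible points for `G̃` of the same value. Conversely, averaging over the blocks of
copies, `Y ↦ A Y Aᵀ`, turns `tr (L_G̃ Y)` into `∑ᵢⱼ wᵢⱼ (1 - (A Y Aᵀ)ⱼᵢ)`; `A Y Aᵀ` is
positive semidefinite with diagonal at most `1`, and raising its diagonal to `1` keeps it so
without changing that sum. For cuts, the average of a sign vector lies in `[-1, 1]ⁿ`; the form `∑ wᵢⱼ sᵢ sⱼ` is affine
in each coordinate, so the average can be rounded coordinatewise to a sign vector whose cut is no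
smaller. Hence `φ(G̃) = φ(G)` and `MC(G̃) = MC(G)`. -/

theorem Matrix.mul_vecMulVec_mul_conjTranspose {m k R : Type*} [Fintype k] [CommSemiring R]
    [StarRing R] [TrivialStar R] (M : Matrix m k R) (x : k → R) :
    M * vecMulVec x x * Mᴴ = vecMulVec (M *ᵥ x) (M *ᵥ x) := by
  rw [mul_vecMulVec, vecMulVec_mul, conjTranspose_eq_transpose_of_trivial, vecMul_transpose]

theorem Matrix.dotProduct_mulVec_eq_trace_mul_vecMulVec {k R : Type*} [Fintype k]
    [CommSemiring R] (M : Matrix k k R) (x : k → R) :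
    x ⬝ᵥ M *ᵥ x = (M * vecMulVec x x).trace := by
  rw [mul_vecMulVec, trace_vecMulVec, dotProduct_comm]

section General

variable {V : Type*}

theorem vecMulVec_self_apply_le_one {x : V → ℝ} (hx : ∀ i, x i = 1 ∨ x i = -1) (i j : V) :
    vecMulVec x x i j ≤ 1 := by
  rcases hx i with hi | hi <;> rcases hx j with hj | hj <;> norm_num [vecMulVec_apply, hi, hj]

theorem vecMulVec_self_apply_self {x : V → ℝ} (hx : ∀ i, x i = 1 ∨ x i = -1) (i : V) :
    vecMulVec x x i i = 1 := by
  rcases hx i with hi | hi <;> norm_num [vecMulVec_apply, hi]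

variable [Fintype V] [DecidableEq V]

theorem trace_lapW_mul {w : V → V → ℝ} (h0 : ∀ i, w i i = 0) {X : Matrix V V ℝ}
    (hX : ∀ i, X i i = 1) : (lapW w * X).trace = ∑ i, ∑ j, w i j * (1 - X j i) := by
  have entry : ∀ i j,
      lapW w i j * X j i = (if i = j then ∑ k, w i k else 0) - w i j * X j i := by
    intro i j
    rcases eq_or_ne i j with rfl | hij
    · simp [lapW, hX, h0]
    · simp [lapW, hij]
  simp only [trace, Matrix.diag, mul_apply, entry, Finset.sum_sub_distrib, Finset.sum_ite_eq,
    Finset.mem_univ, if_true, mul_one_sub]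

theorem Matrix.PosSemidef.apply_le_one {X : Matrix V V ℝ} (hX : X.PosSemidef)
    (hd : ∀ i, X i i = 1) (a b : V) : X a b ≤ 1 := by
  have h := hX.dotProduct_mulVec_nonneg (Pi.single a 1 - Pi.single b 1)
  have hba : X b a = X a b := hX.1.apply a b
  simp [sub_dotProduct, dotProduct_sub, mulVec_sub, hd, hba] at h
  linarith

theorem sum_mul_update_mul_update {w : V → V → ℝ} (h0 : ∀ i, w i i = 0) (s : V → ℝ) (k : V)
    (c : ℝ) :
    ∑ i, ∑ j, w i j * (Function.update s k c i * Function.update s k c j) =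
      ∑ i, ∑ j, w i j * (s i * s j) + (c - s k) * ∑ j, (w k j + w j k) * s j := by
  have hupd : Function.update s k c = s + Pi.single k (c - s k) := by
    ext i; rcases eq_or_ne i k with rfl | h <;> simp [*]
  simp only [hupd, Pi.add_apply, Pi.single_apply, mul_add, add_mul, Finset.sum_add_distrib,
    mul_ite, ite_mul, mul_zero, zero_mul, Finset.sum_ite_irrel, Finset.sum_const_zero,
    Finset.sum_ite_eq', Finset.mem_univ, if_true, h0]
  simp only [Finset.mul_sum, ← Finset.sum_add_distrib, add_zero]
  exact Finset.sum_congr rfl fun _ _ => by ring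

theorem exists_sign_sum_mul_le {w : V → V → ℝ} (h0 : ∀ i, w i i = 0) (s : V → ℝ)
    (hs : ∀ i, |s i| ≤ 1) :
    ∃ x : V → ℝ, (∀ i, x i = 1 ∨ x i = -1) ∧
      ∑ i, ∑ j, w i j * (x i * x j) ≤ ∑ i, ∑ j, w i j * (s i * s j) := by
  suffices h : ∀ (t : Finset V) (s : V → ℝ), (∀ i, |s i| ≤ 1) →
      (∀ i ∉ t, s i = 1 ∨ s i = -1) →
      ∃ x : V → ℝ, (∀ i, x i = 1 ∨ x i = -1) ∧
        ∑ i, ∑ j, w i j * (x i * x j) ≤ ∑ i, ∑ j, w i j * (s i * s j) from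
    h univ s hs fun i hi => absurd (mem_univ i) hi
  intro t
  induction t using Finset.induction_on with
  | empty => exact fun s _ hsign => ⟨s, fun i => hsign i (notMem_empty i), le_rfl⟩
  | insert k t _ ih =>
    intro s hs hsign
    obtain ⟨c, hc, hle⟩ : ∃ c : ℝ, (c = 1 ∨ c = -1) ∧
        ∑ i, ∑ j, w i j * (Function.update s k c i * Function.update s k c j) ≤
          ∑ i, ∑ j, w i j * (s i * s j) := by
      simp only [sum_mul_update_mul_update h0, add_le_iff_nonpos_right]
      have hsk := abs_le.mp (hs k)
      rcases le_total 0 (∑ j, (w k j + w j k) * s j) with hB | hB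
      · exact ⟨-1, Or.inr rfl, by nlinarith⟩
      · exact ⟨1, Or.inl rfl, by nlinarith⟩
    obtain ⟨x, hx, hxle⟩ := ih (Function.update s k c)
      (Function.forall_update_iff _ (p := fun _ y => |y| ≤ 1) |>.mpr
        ⟨by rcases hc with rfl | rfl <;> norm_num, fun i _ => hs i⟩)
      (fun i hi => by
        rcases eq_or_ne i k with rfl | hik
        · simpa using hc
        · simpa [hik] using hsign i (by simp [hik, hi]))
    exact ⟨x, hx, hxle.trans hle⟩

end General

section Split

variable {n : ℕ} (p : Fin n → ℕ)

noncomputable def splitLift : Matrix (Σ i : Fin n, Fin (p i)) (Fin n) ℝ :=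
  of fun a j => if a.1 = j then 1 else 0

noncomputable def splitAvg : Matrix (Fin n) (Σ i : Fin n, Fin (p i)) ℝ :=
  of fun i a => if a.1 = i then (p i : ℝ)⁻¹ else 0

theorem splitLift_mul_mul_conjTranspose_apply (X : Matrix (Fin n) (Fin n) ℝ)
    (a b : Σ i : Fin n, Fin (p i)) : (splitLift p * X * (splitLift p)ᴴ) a b = X a.1 b.1 := by
  simp [mul_apply, splitLift, ite_mul, mul_ite]

theorem splitAvg_mul_splitLift (hp : ∀ i, 0 < p i) : splitAvg p * splitLift p = 1 := by
  ext i j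
  rcases eq_or_ne i j with rfl | hij
  · simp [mul_apply, splitAvg, splitLift, Fintype.sum_sigma, (hp i).ne']
  · simp [mul_apply, splitAvg, splitLift, Fintype.sum_sigma, hij, hij.symm]

theorem splitAvg_mul_mul_conjTranspose_apply
    (Y : Matrix (Σ i : Fin n, Fin (p i)) (Σ i : Fin n, Fin (p i)) ℝ) (i j : Fin n) :
    (splitAvg p * Y * (splitAvg p)ᴴ) i j = (∑ α, ∑ β, Y ⟨i, α⟩ ⟨j, β⟩) / (p i * p j) := by
  simp only [mul_apply, splitAvg, of_apply, conjTranspose_apply, star_trivial, Fintype.sum_sigma,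
    ite_mul, mul_ite, zero_mul, mul_zero, Finset.sum_ite_irrel, Finset.sum_const_zero,
    Finset.sum_ite_eq', Finset.mem_univ, if_true, Finset.sum_mul]
  rw [Fintype.sum_eq_single j fun x hx => by simp [hx], Finset.sum_comm]
  simp only [if_true, div_eq_mul_inv, mul_inv, Finset.sum_mul]
  exact Finset.sum_congr rfl fun _ _ => Finset.sum_congr rfl fun _ _ => by ring

theorem splitAvg_mul_mul_conjTranspose_apply_le_one (hp : ∀ i, 0 < p i)
    {Y : Matrix (Σ i : Fin n, Fin (p i)) (Σ i : Fin n, Fin (p i)) ℝ} (hY : ∀ a b, Y a b ≤ 1)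
    (i j : Fin n) : (splitAvg p * Y * (splitAvg p)ᴴ) i j ≤ 1 := by
  have hpp : (0 : ℝ) < p i * p j := by have := hp i; have := hp j; positivity
  rw [splitAvg_mul_mul_conjTranspose_apply, div_le_one hpp]
  calc ∑ α, ∑ β, Y ⟨i, α⟩ ⟨j, β⟩ ≤ ∑ _α : Fin (p i), ∑ _β : Fin (p j), (1 : ℝ) :=
        Finset.sum_le_sum fun _ _ => Finset.sum_le_sum fun _ _ => hY _ _
    _ = p i * p j := by simp

theorem sum_splitW_mul {w : Fin n → Fin n → ℝ} (h0 : ∀ i, w i i = 0)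
    (g : (Σ i : Fin n, Fin (p i)) → (Σ i : Fin n, Fin (p i)) → ℝ) :
    ∑ a, ∑ b, splitW w p a b * g a b =
      ∑ i, ∑ j, w i j * ((∑ α, ∑ β, g ⟨i, α⟩ ⟨j, β⟩) / (p i * p j)) := by
  simp only [Fintype.sum_sigma]
  refine Finset.sum_congr rfl fun i _ => ?_
  rw [Finset.sum_comm]
  refine Finset.sum_congr rfl fun j _ => ?_
  rcases eq_or_ne i j with rfl | hij
  · simp [splitW, h0]
  · simp only [splitW, hij, if_false, Finset.mul_sum, Finset.sum_div]
    exact Finset.sum_congr rfl fun _ _ => Finset.sum_congr rfl fun _ _ => by ring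

theorem trace_lapW_splitW_mul {w : Fin n → Fin n → ℝ} (h0 : ∀ i, w i i = 0)
    (hp : ∀ i, 0 < p i) {Y : Matrix (Σ i : Fin n, Fin (p i)) (Σ i : Fin n, Fin (p i)) ℝ}
    (hY : ∀ a, Y a a = 1) :
    (lapW (splitW w p) * Y).trace =
      ∑ i, ∑ j, w i j * (1 - (splitAvg p * Y * (splitAvg p)ᴴ) j i) := by
  rw [trace_lapW_mul (w := splitW w p) (fun _ => if_pos rfl) hY, sum_splitW_mul p h0]
  refine Finset.sum_congr rfl fun i _ => Finset.sum_congr rfl fun j _ => ?_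
  have hi : (p i : ℝ) ≠ 0 := by exact_mod_cast (hp i).ne'
  have hj : (p j : ℝ) ≠ 0 := by exact_mod_cast (hp j).ne'
  rw [splitAvg_mul_mul_conjTranspose_apply, Finset.sum_comm (f := fun β α => Y ⟨j, β⟩ ⟨i, α⟩)]
  simp only [Finset.sum_sub_distrib, Finset.sum_const, Finset.card_univ, Fintype.card_fin,
    nsmul_eq_mul, mul_one]
  field_simp

theorem trace_lapW_splitW_mul_lift {w : Fin n → Fin n → ℝ} (h0 : ∀ i, w i i = 0)
    (hp : ∀ i, 0 < p i) {X : Matrix (Fin n) (Fin n) ℝ} (hX : ∀ i, X i i = 1) :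
    (lapW (splitW w p) * (splitLift p * X * (splitLift p)ᴴ)).trace = (lapW w * X).trace := by
  have hAP : splitAvg p * (splitLift p * X * (splitLift p)ᴴ) * (splitAvg p)ᴴ = X := by
    have hconj : splitAvg p * (splitLift p * X * (splitLift p)ᴴ) * (splitAvg p)ᴴ =
        splitAvg p * splitLift p * X * (splitAvg p * splitLift p)ᴴ := by
      simp only [conjTranspose_mul, Matrix.mul_assoc]
    rw [hconj, splitAvg_mul_splitLift p hp, Matrix.one_mul, conjTranspose_one, Matrix.mul_one]
  rw [trace_lapW_splitW_mul p h0 hp fun a => by rw [splitLift_mul_mul_conjTranspose_apply, hX],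
    hAP, trace_lapW_mul h0 hX]

theorem sdpVal_splitW {w : Fin n → Fin n → ℝ} (h0 : ∀ i, w i i = 0) (hp : ∀ i, 0 < p i) :
    sdpVal (splitW w p) = sdpVal w := by
  apply csSup_eq_csSup_of_forall_exists_le
  · rintro _ ⟨Y, hY, hYd, rfl⟩
    set M := splitAvg p * Y * (splitAvg p)ᴴ
    have hMle : ∀ i, M i i ≤ 1 := fun i =>
      splitAvg_mul_mul_conjTranspose_apply_le_one p hp (hY.apply_le_one hYd) i i
    set X := M + diagonal fun i => 1 - M i i
    have hXd : ∀ i, X i i = 1 := fun i => by simp [X]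
    refine ⟨_, ⟨X, (hY.mul_mul_conjTranspose_same _).add
      (posSemidef_diagonal_iff.2 fun i => sub_nonneg.2 (hMle i)), hXd, rfl⟩, le_of_eq ?_⟩
    rw [trace_lapW_splitW_mul p h0 hp hYd, trace_lapW_mul h0 hXd]
    congr 1
    refine Finset.sum_congr rfl fun i _ => Finset.sum_congr rfl fun j _ => ?_
    rcases eq_or_ne j i with rfl | hji
    · simp [h0]
    · simp only [X, M, Matrix.add_apply, diagonal_apply_ne _ hji, add_zero]
  · rintro _ ⟨X, hX, hXd, rfl⟩
    refine ⟨_, ⟨splitLift p * X * (splitLift p)ᴴ, hX.mul_mul_conjTranspose_same _,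
      fun a => by rw [splitLift_mul_mul_conjTranspose_apply, hXd], rfl⟩, ?_⟩
    rw [trace_lapW_splitW_mul_lift p h0 hp hXd]

theorem maxCutVal_splitW {w : Fin n → Fin n → ℝ} (h0 : ∀ i, w i i = 0) (hp : ∀ i, 0 < p i) :
    maxCutVal (splitW w p) = maxCutVal w := by
  apply csSup_eq_csSup_of_forall_exists_le
  · rintro _ ⟨y, hy, rfl⟩
    set s := splitAvg p *ᵥ y
    have hs : ∀ i, |s i| ≤ 1 := fun i => by
      have h := splitAvg_mul_mul_conjTranspose_apply_le_one p hp
        (vecMulVec_self_apply_le_one hy) i i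
      rwa [mul_vecMulVec_mul_conjTranspose, vecMulVec_apply, ← abs_le_one_iff_mul_self_le_one] at h
    obtain ⟨x, hx, hxs⟩ := exists_sign_sum_mul_le h0 s hs
    refine ⟨_, ⟨x, hx, rfl⟩, ?_⟩
    rw [dotProduct_mulVec_eq_trace_mul_vecMulVec, dotProduct_mulVec_eq_trace_mul_vecMulVec,
      trace_lapW_splitW_mul p h0 hp (vecMulVec_self_apply_self hy),
      trace_lapW_mul h0 (vecMulVec_self_apply_self hx),
      mul_vecMulVec_mul_conjTranspose]
    have hswap : ∀ t : Fin n → ℝ,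
        ∑ i, ∑ j, w i j * (t j * t i) = ∑ i, ∑ j, w i j * (t i * t j) :=
      fun t => Finset.sum_congr rfl fun _ _ => Finset.sum_congr rfl fun _ _ => by ring
    simp only [vecMulVec_apply, mul_one_sub, Finset.sum_sub_distrib, hswap]
    gcongr
  · rintro _ ⟨x, hx, rfl⟩
    have hlift : ∀ a, (splitLift p *ᵥ x) a = x a.1 := fun a => by
      simp [splitLift, mulVec, dotProduct]
    refine ⟨_, ⟨splitLift p *ᵥ x, fun a => by rw [hlift]; exact hx a.1, rfl⟩, ?_⟩
    rw [dotProduct_mulVec_eq_trace_mul_vecMulVec, dotProduct_mulVec_eq_trace_mul_vecMulVec,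
      ← mul_vecMulVec_mul_conjTranspose,
      trace_lapW_splitW_mul_lift p h0 hp (vecMulVec_self_apply_self hx)]

end Split

/-- **Exactness is invariant under graph splitting.**
A weighted graph `G` is exact if and only if any split graph `G̃` of `G` is exact. -/
theorem isExact_iff_isExact_splitW {n : ℕ} (w : Fin n → Fin n → ℝ) (hw : IsWeight w)
    (p : Fin n → ℕ) (hp : ∀ i, 0 < p i) :
    IsExact w ↔ IsExact (splitW w p) := by
  rw [IsExact, IsExact, sdpVal_splitW p hw.2.1 hp, maxCutVal_splitW p hw.2.1 hp]
end

section
/- Let n ≥ 3 and let m ∈ ℝⁿ with all entries positive be non-dominating, i.e. mⱼ < Σ_{k≠j} m_k for every j. Let G be the complete graph on n vertices weighted by m, i.e. with edge weights w_{ij} = mᵢmⱼ for i ≠ j, and set M = Σᵢ mᵢ. Then the Max-Cut SDP for G admits an optimal solution X_G with rank(X_G) = n − 1 and (1/4)·tr(L_G X_G) = M²/4; in particular φ(G) = M²/4. -/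
/-!
Since `L_G = M • diag m - m mᵀ`, every feasible `X` has `tr (L_G X) = M² - mᵀ X m ≤ M²`, with
equality as soon as `X m = 0`. So it suffices to find unit vectors `v i` with `∑ i, m i • v i = 0`
whose only linear relations are the multiples of `m`: their Gram matrix is feasible, optimal
and of rank `n - 1`.

Such vectors are built by induction on `n`. Replace `m 0, m 1` by one weight `μ` forming a
nondegenerate triangle with them, chosen so that the shorter vector is still non-dominating.
Given unit vectors for it, split the vector `w` of weight `μ` into two unit vectors `v 0, v 1`
in the plane spanned by `w` and a new coordinate, with `m 0 • v 0 + m 1 • v 1 = μ • w`.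
For `n = 3` take `μ = m 2`; the pair `(m 2, m 2)` is realised by the vectors `1, -1`.
-/

open Matrix Finset

/-- The complete graph on `n` vertices weighted by `m`: edge `ij` has weight `mᵢ mⱼ`. -/
noncomputable def completeW {n : ℕ} (m : Fin n → ℝ) : Fin n → Fin n → ℝ :=
  fun i j => if i = j then 0 else m i * m j

lemma Sum.elim_eq_zero_iff {α β M : Type*} [Zero M] {u : α → M} {v : β → M} :
    Sum.elim u v = 0 ↔ u = 0 ∧ v = 0 :=
  ⟨fun h => ⟨funext fun a => congrFun h (.inl a), funext fun b => congrFun h (.inr b)⟩,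
    fun ⟨hu, hv⟩ => hu ▸ hv ▸ Sum.elim_zero_zero⟩

lemma lapW_completeW {n : ℕ} (m : Fin n → ℝ) :
    lapW (completeW m) = diagonal (fun i => (∑ j, m j) * m i) - vecMulVec m m := by
  ext i j
  by_cases h : i = j
  · subst h
    have hrow : ∀ k, completeW m i k = m i * m k - if i = k then m i * m k else 0 := fun k => by
      by_cases hk : i = k <;> simp [completeW, hk]
    simp [lapW, hrow, sum_sub_distrib, ← mul_sum, vecMulVec_apply, mul_comm]
  · simp [lapW, completeW, h, vecMulVec_apply]

lemma trace_lapW_completeW_mul {n : ℕ} (m : Fin n → ℝ) {Y : Matrix (Fin n) (Fin n) ℝ}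
    (hY : ∀ i, Y i i = 1) :
    (lapW (completeW m) * Y).trace = (∑ i, m i) ^ 2 - m ⬝ᵥ Y *ᵥ m := by
  rw [lapW_completeW, sub_mul, trace_sub, vecMulVec_mul, trace_vecMulVec, dotProduct_mulVec,
    dotProduct_comm]
  simp [trace, hY, ← mul_sum, sq]

lemma trace_lapW_completeW_mul_of_mulVec_eq_zero {n : ℕ} {m : Fin n → ℝ}
    {X : Matrix (Fin n) (Fin n) ℝ} (hdiag : ∀ i, X i i = 1) (hXm : X *ᵥ m = 0) :
    (lapW (completeW m) * X).trace = (∑ i, m i) ^ 2 := by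
  rw [trace_lapW_completeW_mul m hdiag, hXm, dotProduct_zero, sub_zero]

lemma sdpVal_completeW {n : ℕ} {m : Fin n → ℝ} {X : Matrix (Fin n) (Fin n) ℝ}
    (hX : X.PosSemidef) (hdiag : ∀ i, X i i = 1) (hXm : X *ᵥ m = 0) :
    sdpVal (completeW m) = (∑ i, m i) ^ 2 / 4 := by
  refine IsGreatest.csSup_eq ⟨⟨X, hX, hdiag, ?_⟩, ?_⟩
  · rw [trace_lapW_completeW_mul_of_mulVec_eq_zero hdiag hXm]
    ring
  · rintro c ⟨Y, hY, hYdiag, rfl⟩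
    rw [trace_lapW_completeW_mul m hYdiag]
    linarith [show 0 ≤ m ⬝ᵥ Y *ᵥ m by simpa using hY.dotProduct_mulVec_nonneg m]

structure IsBalancedUnitFrame {ι κ : Type*} [Fintype ι] [Fintype κ] (m : ι → ℝ)
    (V : Matrix ι κ ℝ) : Prop where
  dotProduct_self_row : ∀ i, V i ⬝ᵥ V i = 1
  vecMul_eq_zero_iff : ∀ x, x ᵥ* V = 0 ↔ ∃ c : ℝ, x = c • m

namespace IsBalancedUnitFrame

variable {ι κ : Type*} [Fintype ι] [Fintype κ] {m : ι → ℝ} {V : Matrix ι κ ℝ}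

lemma vecMul_self (hV : IsBalancedUnitFrame m V) : m ᵥ* V = 0 :=
  (hV.vecMul_eq_zero_iff m).2 ⟨1, (one_smul ℝ m).symm⟩

lemma mul_transpose_apply_self (hV : IsBalancedUnitFrame m V) (i : ι) : (V * Vᵀ) i i = 1 :=
  hV.dotProduct_self_row i

lemma mul_transpose_mulVec_self (hV : IsBalancedUnitFrame m V) : (V * Vᵀ) *ᵥ m = 0 := by
  rw [← mulVec_mulVec, mulVec_transpose, hV.vecMul_self, mulVec_zero]

lemma ker_mulVecLin_transpose (hV : IsBalancedUnitFrame m V) :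
    LinearMap.ker Vᵀ.mulVecLin = ℝ ∙ m := by
  ext x
  simp only [LinearMap.mem_ker, mulVecLin_apply, mulVec_transpose, hV.vecMul_eq_zero_iff,
    Submodule.mem_span_singleton, eq_comm]

lemma rank_mul_transpose (hV : IsBalancedUnitFrame m V) (hm : m ≠ 0) :
    (V * Vᵀ).rank = Fintype.card ι - 1 := by
  have h := LinearMap.finrank_range_add_finrank_ker Vᵀ.mulVecLin
  rw [hV.ker_mulVecLin_transpose, finrank_span_singleton hm, Module.finrank_fintype_fun_eq_card]
    at h
  rw [rank_self_mul_transpose, ← rank_transpose, rank]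
  omega

end IsBalancedUnitFrame

lemma isBalancedUnitFrame_pair {a : ℝ} (ha : a ≠ 0) :
    IsBalancedUnitFrame ![a, a] (replicateCol Unit ![1, -1]) where
  dotProduct_self_row i := by fin_cases i <;> simp [dotProduct]
  vecMul_eq_zero_iff x := by
    constructor
    · intro h
      have h' := congrFun h ()
      simp only [vecMul, dotProduct, Fin.sum_univ_two, replicateCol_apply, Matrix.cons_val_zero,
        Matrix.cons_val_one, mul_one, mul_neg, Pi.zero_apply] at h'
      refine ⟨x 0 / a, ?_⟩
      ext i
      fin_cases i
      · simp [div_mul_cancel₀ _ ha]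
      · simp [div_mul_cancel₀ _ ha]
        linarith
    · rintro ⟨c, rfl⟩
      ext
      simp [vecMul, dotProduct]

/-- `(α, β)` and `(γ, -δ)` are unit vectors with `b • (α, β) + c • (γ, -δ) = (a, 0)`. -/
lemma exists_unit_vectors_of_triangle {a b c : ℝ} (hab : a < b + c) (hbc : b < a + c)
    (hca : c < a + b) :
    ∃ α β γ δ : ℝ, α ^ 2 + β ^ 2 = 1 ∧ γ ^ 2 + δ ^ 2 = 1 ∧ α * b + γ * c = a ∧
      β * b = δ * c ∧ β ≠ 0 := by
  have ha : 0 < a := by linarith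
  have hb : 0 < b := by linarith
  have hc : 0 < c := by linarith
  set α := (a ^ 2 + b ^ 2 - c ^ 2) / (2 * a * b)
  have hα : α ^ 2 < 1 := by
    rw [div_pow, div_lt_one (by positivity)]
    nlinarith [mul_pos (mul_pos (by linarith : 0 < c - a + b) (by linarith : 0 < c + a - b))
      (mul_pos (by linarith : 0 < a + b - c) (by linarith : 0 < a + b + c))]
  set β := √(1 - α ^ 2)
  have hβ : β ^ 2 = 1 - α ^ 2 := Real.sq_sqrt (by linarith)
  refine ⟨α, β, (a - α * b) / c, β * b / c, by linarith, ?_, by field_simp; ring,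
    by field_simp, (Real.sqrt_pos.2 (by linarith)).ne'⟩
  rw [div_pow, div_pow, ← add_div, div_eq_one_iff_eq (by positivity), mul_pow, hβ]
  simp only [α]
  field_simp
  ring

lemma eq_mul_of_triangle_relations {α β γ δ μ a b x y c : ℝ} (hsum : α * a + γ * b = μ)
    (hrot : β * a = δ * b) (hβ : β ≠ 0) (hμ : μ ≠ 0) (h₁ : α * x + γ * y = c * μ)
    (h₂ : β * x = δ * y) : x = c * a ∧ y = c * b := by
  have hxy : x * b = y * a := mul_left_cancel₀ hβ (by linear_combination b * h₂ - y * hrot)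
  constructor <;> refine mul_left_cancel₀ hμ ?_
  · linear_combination a * h₁ - x * hsum + γ * hxy
  · linear_combination b * h₁ - y * hsum - α * hxy

def mergeFirstTwo {p : ℕ} (μ : ℝ) (m : Fin (p + 2) → ℝ) : Fin (p + 1) → ℝ :=
  Fin.cons μ fun j => m j.succ.succ

lemma sum_mergeFirstTwo {p : ℕ} (μ : ℝ) (m : Fin (p + 2) → ℝ) :
    ∑ i, mergeFirstTwo μ m i = μ + ∑ j : Fin p, m j.succ.succ := by
  simp [mergeFirstTwo, Fin.sum_univ_succ]

lemma sum_eq_add_sum_succ_succ {p : ℕ} (m : Fin (p + 2) → ℝ) :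
    ∑ i, m i = m 0 + m 1 + ∑ j : Fin p, m j.succ.succ := by
  simp [Fin.sum_univ_succ, add_assoc]

lemma vecMul_cons_smul_cons_smul {p : ℕ} {κ : Type*} [Fintype κ] (α γ : ℝ)
    (V : Matrix (Fin (p + 1)) κ ℝ) (x : Fin (p + 2) → ℝ) :
    x ᵥ* (Fin.cons (α • V 0) (Fin.cons (γ • V 0) (Fin.tail V)) : Matrix (Fin (p + 2)) κ ℝ) =
      mergeFirstTwo (α * x 0 + γ * x 1) x ᵥ* V := by
  ext k
  simp [vecMul, dotProduct, Fin.sum_univ_succ, mergeFirstTwo, Fin.tail]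
  ring

lemma exists_isBalancedUnitFrame_of_mergeFirstTwo {p : ℕ} {m : Fin (p + 2) → ℝ} {μ : ℝ}
    (h₀ : μ < m 0 + m 1) (h₁ : m 0 < μ + m 1) (h₂ : m 1 < μ + m 0) {κ : Type} [Fintype κ]
    {V : Matrix (Fin (p + 1)) κ ℝ} (hV : IsBalancedUnitFrame (mergeFirstTwo μ m) V) :
    ∃ (κ' : Type) (_ : Fintype κ') (W : Matrix (Fin (p + 2)) κ' ℝ), IsBalancedUnitFrame m W := by
  obtain ⟨α, β, γ, δ, hαβ, hγδ, hsum, hrot, hβ⟩ := exists_unit_vectors_of_triangle h₀ h₁ h₂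
  have hμ : μ ≠ 0 := by linarith
  let A : Matrix (Fin (p + 2)) κ ℝ := Fin.cons (α • V 0) (Fin.cons (γ • V 0) (Fin.tail V))
  let b : Fin (p + 2) → ℝ := Fin.cons β (Fin.cons (-δ) 0)
  refine ⟨κ ⊕ Unit, inferInstance, fromCols A (replicateCol Unit b), ⟨fun i => ?_, fun x => ?_⟩⟩
  · rw [show fromCols A (replicateCol Unit b) i = Sum.elim (A i) (fun _ => b i) from rfl,
      sumElim_dotProduct_sumElim]
    refine Fin.cases ?_ (Fin.cases ?_ fun j => ?_) i
    · simp [A, b, hV.dotProduct_self_row]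
      linear_combination hαβ
    · simp [A, b, hV.dotProduct_self_row]
      linear_combination hγδ
    · simpa [A, b, Fin.tail] using hV.dotProduct_self_row j.succ
  · have hb : x ᵥ* replicateCol Unit b = fun _ => β * x 0 - δ * x 1 := by
      ext
      simp [vecMul, dotProduct, Fin.sum_univ_succ, b]
      ring
    rw [vecMul_fromCols, vecMul_cons_smul_cons_smul, hb, Sum.elim_eq_zero_iff,
      hV.vecMul_eq_zero_iff]
    simp only [mergeFirstTwo, funext_iff, Fin.forall_fin_succ, Fin.cons_zero, Fin.cons_succ,
      Pi.smul_apply, smul_eq_mul, Pi.zero_apply, sub_eq_zero, Fin.succ_zero_eq_one]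
    constructor
    · rintro ⟨⟨c, hc₀, hc⟩, hx⟩
      obtain ⟨hx₀, hx₁⟩ := eq_mul_of_triangle_relations hsum hrot hβ hμ hc₀ (hx ())
      exact ⟨c, hx₀, hx₁, hc⟩
    · rintro ⟨c, hx₀, hx₁, hc⟩
      refine ⟨⟨c, ?_, hc⟩, fun _ => ?_⟩
      · rw [hx₀, hx₁, ← hsum]
        ring
      · rw [hx₀, hx₁]
        linear_combination c * hrot

lemma exists_mergeFirstTwo_nondominating {p : ℕ} {m : Fin (p + 4) → ℝ} (hpos : ∀ i, 0 < m i)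
    (hnd : ∀ j, 2 * m j < ∑ i, m i) :
    ∃ μ, μ < m 0 + m 1 ∧ m 0 < μ + m 1 ∧ m 1 < μ + m 0 ∧ (∀ i, 0 < mergeFirstTwo μ m i) ∧
      ∀ j, 2 * mergeFirstTwo μ m j < ∑ i, mergeFirstTwo μ m i := by
  have hM := sum_eq_add_sum_succ_succ m
  set R := ∑ j : Fin (p + 2), m j.succ.succ
  have hR : ∀ j : Fin (p + 2), m j.succ.succ < R := fun j =>
    have ⟨k, hk⟩ := exists_ne j
    single_lt_sum (f := fun j : Fin (p + 2) => m j.succ.succ) hk (mem_univ j) (mem_univ k)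
      (hpos _) fun i _ _ => (hpos _).le
  have hnd' : ∀ j, 2 * m j < m 0 + m 1 + R := fun j => hM ▸ hnd j
  have h₀ := hnd' 0
  have h₁ := hnd' 1
  obtain ⟨μ, hL, hU⟩ : ∃ μ, max |m 0 - m 1| (univ.sup' univ_nonempty
      fun j : Fin (p + 2) => 2 * m j.succ.succ - R) < μ ∧ μ < min (m 0 + m 1) R := by
    refine exists_between ?_
    simp only [max_lt_iff, sup'_lt_iff, lt_min_iff, abs_sub_lt_iff, mem_univ, true_implies]
    refine ⟨⟨⟨by linarith [hpos 1], by linarith [hpos 0]⟩, fun j => ?_⟩,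
      ⟨by linarith, by linarith⟩, fun j => by linarith [hR j]⟩
    linarith [hnd' j.succ.succ]
  simp only [max_lt_iff, sup'_lt_iff, lt_min_iff, abs_sub_lt_iff, mem_univ, true_implies] at hL hU
  refine ⟨μ, hU.1, by linarith, by linarith, Fin.cases ?_ fun j => ?_, Fin.cases ?_ fun j => ?_⟩
  · simp only [mergeFirstTwo, Fin.cons_zero]
    linarith
  · exact hpos _
  · rw [sum_mergeFirstTwo]
    simp only [mergeFirstTwo, Fin.cons_zero]
    linarith
  · rw [sum_mergeFirstTwo]
    simp only [mergeFirstTwo, Fin.cons_succ]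
    linarith [hL.2 j]

lemma exists_isBalancedUnitFrame {n : ℕ} (hn : 3 ≤ n) {m : Fin n → ℝ} (hpos : ∀ i, 0 < m i)
    (hnd : ∀ j, 2 * m j < ∑ i, m i) :
    ∃ (κ : Type) (_ : Fintype κ) (V : Matrix (Fin n) κ ℝ), IsBalancedUnitFrame m V := by
  induction n, hn using Nat.le_induction with
  | base =>
    have h₀ := hnd 0
    have h₁ := hnd 1
    have h₂ := hnd 2
    simp only [Fin.sum_univ_three] at h₀ h₁ h₂
    have hpair : mergeFirstTwo (m 2) m = ![m 2, m 2] := by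
      ext i
      fin_cases i <;> rfl
    exact exists_isBalancedUnitFrame_of_mergeFirstTwo (by linarith) (by linarith) (by linarith)
      (hpair ▸ isBalancedUnitFrame_pair (hpos 2).ne')
  | succ n hn ih =>
    obtain ⟨p, rfl⟩ : ∃ p, n = p + 3 := ⟨n - 3, by omega⟩
    obtain ⟨μ, h₀, h₁, h₂, hpos', hnd'⟩ := exists_mergeFirstTwo_nondominating hpos hnd
    obtain ⟨κ, _, V, hV⟩ := ih hpos' hnd'
    exact exists_isBalancedUnitFrame_of_mergeFirstTwo h₀ h₁ h₂ hV

/-- **Maximum-rank optimal solutions for non-dominated weighted complete graphs.**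
Let `n ≥ 3` and let `m ∈ ℝⁿ` be positive and non-dominating (`mⱼ < ∑_{k ≠ j} m_k` for all
`j`). For the complete graph weighted by `m`, the Max-Cut SDP admits an optimal solution
`X_G` with `rank X_G = n - 1` and `(1/4)·tr(L_G X_G) = M²/4` where `M = ∑ mᵢ`; in
particular `φ(G) = M²/4`. -/
theorem completeW_exists_optSol_rank_sub_one {n : ℕ} (hn : 3 ≤ n) (m : Fin n → ℝ)
    (hpos : ∀ i, 0 < m i)
    (hnd : ∀ j, m j < ∑ k ∈ Finset.univ.erase j, m k) :
    ∃ X : Matrix (Fin n) (Fin n) ℝ,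
      IsOptSol (completeW m) X ∧
      X.rank = n - 1 ∧
      (1 / 4) * (lapW (completeW m) * X).trace = (∑ i, m i) ^ 2 / 4 ∧
      sdpVal (completeW m) = (∑ i, m i) ^ 2 / 4 := by
  have hnd' : ∀ j, 2 * m j < ∑ i, m i := fun j => by
    linarith [hnd j, add_sum_erase univ m (mem_univ j)]
  obtain ⟨κ, _, V, hV⟩ := exists_isBalancedUnitFrame hn hpos hnd'
  have hm : m ≠ 0 := fun h => (hpos ⟨0, by omega⟩).ne' (by simp [h])
  have hpsd : (V * Vᵀ).PosSemidef := by simpa using posSemidef_self_mul_conjTranspose V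
  have hdiag := hV.mul_transpose_apply_self
  have hXm := hV.mul_transpose_mulVec_self
  have hval : (1 / 4) * (lapW (completeW m) * (V * Vᵀ)).trace = (∑ i, m i) ^ 2 / 4 := by
    rw [trace_lapW_completeW_mul_of_mulVec_eq_zero hdiag hXm]
    ring
  have hsdp := sdpVal_completeW hpsd hdiag hXm
  exact ⟨V * Vᵀ, ⟨hpsd, hdiag, hval.trans hsdp.symm⟩, by simpa using hV.rank_mul_transpose hm,
    hval, hsdp⟩
end

section
/- Let G₁ and G₂ be unweighted simple graphs on m and n vertices respectively. Then the Laplacian of the lexicographic product satisfies L_{G₁•G₂} = I_m ⊗ D_{G₂} + D_{G₁} ⊗ (n·I_n) + I_m ⊗ (L_{G₂} − D_{G₂}) + (L_{G₁} − D_{G₁}) ⊗ J_n, where D_G denotes the diagonal degree matrix of G, I_k the k×k identity matrix, J_n the n×n all-ones matrix, and ⊗ the Kronecker product. -/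
/-!
The weight matrix of `G₁ • G₂` is `A₁ ⊗ J + I ⊗ A₂`, so the vertex `(i, j)` has degree
`n · deg₁ i + deg₂ j`. A zero-diagonal weight `w` has Laplacian `diag (row sums of w) − w`,
and `L_G − D_G = −A_G`; both sides of the identity are therefore `D − (A₁ ⊗ J + I ⊗ A₂)`
with the same diagonal `D`.
-/

open Matrix Finset

open Kronecker

/-- The weight function of an unweighted simple graph. -/
def gW {V : Type*} (G : SimpleGraph V) [DecidableRel G.Adj] : V → V → ℝ :=
  fun i j => if G.Adj i j then 1 else 0

/-- The weight function of the (unweighted) lexicographic product `G₁ • G₂`. -/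
def lexW {V₁ V₂ : Type*} [DecidableEq V₁] (G₁ : SimpleGraph V₁) (G₂ : SimpleGraph V₂)
    [DecidableRel G₁.Adj] [DecidableRel G₂.Adj] : (V₁ × V₂) → (V₁ × V₂) → ℝ :=
  fun a b => if G₁.Adj a.1 b.1 ∨ (a.1 = b.1 ∧ G₂.Adj a.2 b.2) then 1 else 0

/-- The diagonal degree matrix of a simple graph. -/
noncomputable def degMat {V : Type*} [Fintype V] [DecidableEq V] (G : SimpleGraph V)
    [DecidableRel G.Adj] : Matrix V V ℝ :=
  Matrix.diagonal fun v => (G.degree v : ℝ)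

namespace Matrix

variable {l m n p α : Type*}

theorem kronecker_neg [NonUnitalNonAssocRing α] (A : Matrix l m α) (B : Matrix n p α) :
    A ⊗ₖ (-B) = -(A ⊗ₖ B) := by
  ext
  simp

theorem neg_kronecker [NonUnitalNonAssocRing α] (A : Matrix l m α) (B : Matrix n p α) :
    (-A) ⊗ₖ B = -(A ⊗ₖ B) := by
  ext
  simp

theorem sum_kronecker_apply [Fintype m] [Fintype p] [NonUnitalNonAssocSemiring α]
    (A : Matrix l m α) (B : Matrix n p α) (a : l × n) :
    ∑ b, (A ⊗ₖ B) a b = (∑ k, A a.1 k) * ∑ k, B a.2 k := by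
  simp only [Fintype.sum_prod_type, kroneckerMap_apply, Finset.sum_mul_sum]

end Matrix

theorem lapW_eq_diagonal_sub {V : Type*} [Fintype V] [DecidableEq V] {w : V → V → ℝ}
    (hw : ∀ i, w i i = 0) : lapW w = diagonal (fun i => ∑ k, w i k) - of w := by
  ext i j
  rcases eq_or_ne i j with rfl | h
  · simp [lapW, hw]
  · simp [lapW, h]

section

variable {V V₁ V₂ : Type*}

theorem of_gW (G : SimpleGraph V) [DecidableRel G.Adj] : of (gW G) = G.adjMatrix ℝ := by
  ext
  simp [gW]

theorem sum_gW [Fintype V] (G : SimpleGraph V) [DecidableRel G.Adj] (i : V) :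
    ∑ k, gW G i k = G.degree i :=
  (G.degree_eq_sum_if_adj i).symm

theorem lapW_gW [Fintype V] [DecidableEq V] (G : SimpleGraph V) [DecidableRel G.Adj] :
    lapW (gW G) = G.lapMatrix ℝ := by
  rw [lapW_eq_diagonal_sub (fun i => if_neg (G.irrefl (v := i))), of_gW]
  simp only [sum_gW, SimpleGraph.lapMatrix, SimpleGraph.degMatrix]

theorem degMat_eq_degMatrix [Fintype V] [DecidableEq V] (G : SimpleGraph V)
    [DecidableRel G.Adj] : degMat G = G.degMatrix ℝ :=
  rfl

theorem of_lexW [DecidableEq V₁] [DecidableEq V₂] (G₁ : SimpleGraph V₁) (G₂ : SimpleGraph V₂)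
    [DecidableRel G₁.Adj] [DecidableRel G₂.Adj] :
    of (lexW G₁ G₂) = G₁.adjMatrix ℝ ⊗ₖ of (fun _ _ => 1) + 1 ⊗ₖ G₂.adjMatrix ℝ := by
  ext ⟨i, j⟩ ⟨k, l⟩
  by_cases hik : G₁.Adj i k
  · simp [lexW, hik, hik.ne, one_apply]
  · by_cases h : i = k <;> simp [lexW, hik, h, one_apply]

theorem sum_lexW [Fintype V₁] [DecidableEq V₁] [Fintype V₂] [DecidableEq V₂]
    (G₁ : SimpleGraph V₁) (G₂ : SimpleGraph V₂) [DecidableRel G₁.Adj] [DecidableRel G₂.Adj]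
    (a : V₁ × V₂) :
    ∑ b, lexW G₁ G₂ a b = G₁.degree a.1 * Fintype.card V₂ + G₂.degree a.2 := by
  have h : ∑ b, lexW G₁ G₂ a b = ∑ b, of (lexW G₁ G₂) a b := rfl
  rw [h, of_lexW]
  simp only [Matrix.add_apply, Finset.sum_add_distrib, sum_kronecker_apply, ← of_gW, of_apply,
    sum_gW, one_apply, Finset.sum_ite_eq, Finset.mem_univ, if_true, Finset.sum_const,
    Finset.card_univ, nsmul_eq_mul, mul_one, one_mul]

theorem lexW_self [DecidableEq V₁] (G₁ : SimpleGraph V₁) (G₂ : SimpleGraph V₂)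
    [DecidableRel G₁.Adj] [DecidableRel G₂.Adj] (a : V₁ × V₂) : lexW G₁ G₂ a a = 0 := by
  simp [lexW]

theorem diagonal_sum_lexW [Fintype V₁] [DecidableEq V₁] [Fintype V₂] [DecidableEq V₂]
    (G₁ : SimpleGraph V₁) (G₂ : SimpleGraph V₂) [DecidableRel G₁.Adj] [DecidableRel G₂.Adj] :
    diagonal (fun a => ∑ b, lexW G₁ G₂ a b) =
      1 ⊗ₖ degMat G₂ + degMat G₁ ⊗ₖ ((Fintype.card V₂ : ℝ) • (1 : Matrix V₂ V₂ ℝ)) := by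
  rw [← diagonal_one (n := V₁), ← diagonal_one (n := V₂), ← diagonal_smul, degMat, degMat,
    diagonal_kronecker_diagonal, diagonal_kronecker_diagonal, diagonal_add]
  congr 1
  funext a
  simp [sum_lexW, add_comm]

end

/-- **Laplacian of the lexicographic product.**
For simple graphs `G₁` (on `m` vertices) and `G₂` (on `n` vertices),
`L_{G₁•G₂} = I_m ⊗ D_{G₂} + D_{G₁} ⊗ (n I_n) + I_m ⊗ (L_{G₂} − D_{G₂})
+ (L_{G₁} − D_{G₁}) ⊗ J_n`. -/
theorem lapW_lexW {V₁ V₂ : Type*} [Fintype V₁] [DecidableEq V₁]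
    [Fintype V₂] [DecidableEq V₂]
    (G₁ : SimpleGraph V₁) (G₂ : SimpleGraph V₂)
    [DecidableRel G₁.Adj] [DecidableRel G₂.Adj] :
    lapW (lexW G₁ G₂) =
      (1 : Matrix V₁ V₁ ℝ) ⊗ₖ degMat G₂
      + degMat G₁ ⊗ₖ ((Fintype.card V₂ : ℝ) • (1 : Matrix V₂ V₂ ℝ))
      + (1 : Matrix V₁ V₁ ℝ) ⊗ₖ (lapW (gW G₂) - degMat G₂)
      + (lapW (gW G₁) - degMat G₁) ⊗ₖ Matrix.of (fun _ _ => (1 : ℝ)) := by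
  rw [lapW_eq_diagonal_sub (lexW_self G₁ G₂), diagonal_sum_lexW, of_lexW]
  simp only [lapW_gW, SimpleGraph.lapMatrix, degMat_eq_degMatrix, sub_sub_cancel_left,
    kronecker_neg, neg_kronecker]
  abel
end

section
/- Let G = (V,E) be an unweighted simple graph on n vertices, let x ∈ {−1,1}ⁿ be a vector attaining the maximum cut of G, let Y be a diagonal n×n matrix such that S̄ := Y − (1/4)L_G is positive semidefinite and xᵀS̄x = 0 (i.e. (x xᵀ, S̄) is an optimal primal–dual pair for the Max-Cut SDP). Then for every vertex i, Y_{ii} = δᵢ/2, where δᵢ = |{ j : ij ∈ E and xᵢ ≠ xⱼ }| is the number of edges incident to i crossing the cut induced by x; moreover δᵢ ≥ deg_G(i)/2. -/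
open Matrix Finset

/-- The number of edges incident to `i` crossing the cut induced by `x`. -/
noncomputable def crossDeg {V : Type*} [Fintype V] (G : SimpleGraph V)
    [DecidableRel G.Adj] (x : V → ℝ) (i : V) : ℕ :=
  ((G.neighborFinset i).filter fun j => x i ≠ x j).card


/-! Complementary slackness forces `S̄ x = 0`, i.e. `dᵢ xᵢ = (1/4) (L_G x)ᵢ`; multiplying by
`xᵢ = ±1` turns the right-hand side into `(1/4) ∑_{j ~ i} xᵢ (xᵢ - xⱼ) = δᵢ / 2`, since each
crossing edge contributes `2` and every other edge `0`. The inequality `δᵢ ≥ deg(i)/2` is the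
nonnegativity of the diagonal entry `S̄ᵢᵢ = dᵢ - deg(i)/4`. -/

theorem gW_self {V : Type*} (G : SimpleGraph V) [DecidableRel G.Adj] (i : V) : gW G i i = 0 := by
  simp [gW]

theorem lapW_mulVec_apply {V : Type*} [Fintype V] [DecidableEq V] {w : V → V → ℝ}
    (hw : ∀ i, w i i = 0) (x : V → ℝ) (i : V) :
    (lapW w *ᵥ x) i = ∑ j, w i j * (x i - x j) := by
  have hterm : ∀ j, lapW w i j * x j = (if i = j then (∑ k, w i k) * x i else 0) - w i j * x j := by
    intro j
    by_cases hij : i = j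
    · subst hij
      simp [lapW, hw]
    · simp [lapW, hij]
  simp only [mulVec, dotProduct, hterm, Finset.sum_sub_distrib, Finset.sum_ite_eq,
    Finset.mem_univ, if_true, mul_sub, Finset.sum_mul]

theorem mul_sub_eq_ite_of_sign {a b : ℝ} (ha : a = 1 ∨ a = -1) (hb : b = 1 ∨ b = -1) :
    a * (a - b) = if a ≠ b then 2 else 0 := by
  rcases ha with rfl | rfl <;> rcases hb with rfl | rfl <;> norm_num

section SimpleGraph

variable {V : Type*} [Fintype V] (G : SimpleGraph V) [DecidableRel G.Adj]

theorem sum_gW_mul (i : V) (f : V → ℝ) :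
    ∑ j, gW G i j * f j = ∑ j ∈ G.neighborFinset i, f j := by
  simp only [gW, ite_mul, one_mul, zero_mul]
  rw [← Finset.sum_filter, SimpleGraph.neighborFinset_eq_filter]

variable [DecidableEq V]

theorem lapW_gW_apply_self (i : V) : lapW (gW G) i i = G.degree i := by
  simpa [lapW] using sum_gW_mul G i 1

theorem lapW_gW_mulVec_apply (x : V → ℝ) (i : V) :
    (lapW (gW G) *ᵥ x) i = ∑ j ∈ G.neighborFinset i, (x i - x j) := by
  rw [lapW_mulVec_apply (gW_self G), sum_gW_mul]

theorem mul_lapW_gW_mulVec_apply {x : V → ℝ} (hx : ∀ v, x v = 1 ∨ x v = -1) (i : V) :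
    x i * (lapW (gW G) *ᵥ x) i = 2 * crossDeg G x i := by
  rw [lapW_gW_mulVec_apply, Finset.mul_sum,
    Finset.sum_congr rfl fun j _ => mul_sub_eq_ite_of_sign (hx i) (hx j), ← Finset.sum_filter,
    Finset.sum_const, nsmul_eq_mul, crossDeg, mul_comm]

end SimpleGraph

theorem diagonal_dual_certificate_general {V : Type*} [Fintype V] [DecidableEq V]
    (G : SimpleGraph V) [DecidableRel G.Adj]
    (x : V → ℝ) (hx : ∀ v, x v = 1 ∨ x v = -1)
    (d : V → ℝ)
    (hpsd : (Matrix.diagonal d - (1 / 4 : ℝ) • lapW (gW G)).PosSemidef)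
    (hcs : x ⬝ᵥ (Matrix.diagonal d - (1 / 4 : ℝ) • lapW (gW G)).mulVec x = 0) :
    ∀ i, d i = (crossDeg G x i : ℝ) / 2 ∧
      (G.degree i : ℝ) / 2 ≤ (crossDeg G x i : ℝ) := by
  intro i
  have hker : (Matrix.diagonal d - (1 / 4 : ℝ) • lapW (gW G)) *ᵥ x = 0 :=
    (hpsd.dotProduct_mulVec_zero_iff x).mp (by simpa using hcs)
  have hrow : d i * x i = (1 / 4) * (lapW (gW G) *ᵥ x) i := by
    have := congrFun hker i
    simp only [sub_mulVec, smul_mulVec, mulVec_diagonal, Pi.sub_apply, Pi.smul_apply,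
      smul_eq_mul, Pi.zero_apply] at this
    linarith
  have hxx : x i * x i = 1 := mul_self_eq_one_iff.mpr (hx i)
  have hd : d i = (crossDeg G x i : ℝ) / 2 := by
    linear_combination x i * hrow - d i * hxx + (1 / 4) * mul_lapW_gW_mulVec_apply G hx i
  have hdiag : 0 ≤ d i - (1 / 4) * G.degree i := by
    simpa [lapW_gW_apply_self] using hpsd.diag_nonneg (i := i)
  exact ⟨hd, by linarith⟩

/-- **Diagonal dual certificates of max cuts.**
Let `G` be an unweighted simple graph, `x` a `±1` vector attaining the maximum cut of `G`,
and `Y = diagonal d` a diagonal matrix such that `S̄ = Y − (1/4) L_G` is positive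
semidefinite and `xᵀ S̄ x = 0` (so `(x xᵀ, S̄)` is an optimal primal–dual pair for the
Max-Cut SDP). Then `Y_{ii} = δᵢ / 2`, where `δᵢ` is the number of edges incident to `i`
crossing the cut, and moreover `δᵢ ≥ deg_G(i) / 2`. -/
theorem diagonal_dual_certificate {V : Type*} [Fintype V] [DecidableEq V]
    (G : SimpleGraph V) [DecidableRel G.Adj]
    (x : V → ℝ) (hx : ∀ v, x v = 1 ∨ x v = -1)
    (hmax : (1 / 4) * (x ⬝ᵥ (lapW (gW G)).mulVec x) = maxCutVal (gW G))
    (d : V → ℝ)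
    (hpsd : (Matrix.diagonal d - (1 / 4 : ℝ) • lapW (gW G)).PosSemidef)
    (hcs : x ⬝ᵥ (Matrix.diagonal d - (1 / 4 : ℝ) • lapW (gW G)).mulVec x = 0) :
    ∀ i, d i = (crossDeg G x i : ℝ) / 2 ∧
      (G.degree i : ℝ) / 2 ≤ (crossDeg G x i : ℝ) :=
  diagonal_dual_certificate_general G x hx d hpsd hcs
end

section
/- Let n ≥ 3 and let m ∈ ℝⁿ with all entries positive be non-dominating, i.e. mⱼ < Σ_{k≠j} m_k for every j, and set M = Σᵢ mᵢ. For each i define uⁱ ∈ ℝⁿ by uⁱⱼ = 1 for j ≠ i and uⁱᵢ = −(M − mᵢ)/mᵢ. Then there exist real numbers d′₁,…,d′ₙ > 0 such that Σᵢ d′ᵢ · (uⁱ ∘ uⁱ) equals the all-ones vector, where uⁱ ∘ uⁱ denotes the entrywise square of uⁱ. -/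
open Finset

/-- For a positive weight vector `m` with total mass `M = ∑ m k`, the vector `uⁱ` has
`j`-th entry `1` for `j ≠ i`, and `i`-th entry `−(M − mᵢ)/mᵢ`. -/
noncomputable def uvec {n : ℕ} (m : Fin n → ℝ) (i : Fin n) : Fin n → ℝ :=
  fun j => if j = i then -(((∑ k, m k) - m i) / m i) else 1

/-! Since `(uⁱⱼ)² = 1` off the diagonal, the `j`-th entry of `∑ᵢ dᵢ (uⁱ ∘ uⁱ)` is
`∑ᵢ dᵢ + dⱼ eⱼ` with `eⱼ = (uʲⱼ)² − 1`, and non-domination makes every `eⱼ` positive.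
The linear system `∑ᵢ dᵢ + dⱼ eⱼ = 1` has the explicit positive solution
`dⱼ = 1 / ((1 + T) eⱼ)`, where `T = ∑ᵢ 1 / eᵢ`. -/

theorem exists_pos_sum_add_mul_eq_one {ι : Type*} [Fintype ι] (e : ι → ℝ)
    (he : ∀ i, 0 < e i) : ∃ d : ι → ℝ, (∀ i, 0 < d i) ∧ ∀ j, ∑ i, d i + d j * e j = 1 := by
  set T := ∑ i, 1 / e i
  have hT : 0 < 1 + T := by
    have : 0 ≤ T := sum_nonneg fun i _ => (one_div_pos.mpr (he i)).le
    linarith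
  refine ⟨fun i => 1 / ((1 + T) * e i), fun i => by have := he i; positivity, fun j => ?_⟩
  have hsum : ∑ i, 1 / ((1 + T) * e i) = T / (1 + T) := by
    rw [sum_div]
    refine sum_congr rfl fun i _ => ?_
    have := (he i).ne'
    field_simp
  rw [hsum]
  have := (he j).ne'
  field_simp
  ring

theorem sum_mul_uvec_sq {n : ℕ} (m d : Fin n → ℝ) (j : Fin n) :
    ∑ i, d i * uvec m i j ^ 2 = ∑ i, d i + d j * (uvec m j j ^ 2 - 1) := by
  have hterm : ∀ i,
      d i * uvec m i j ^ 2 = d i + if j = i then d i * (uvec m i i ^ 2 - 1) else 0 := by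
    intro i
    by_cases h : j = i
    · subst h
      rw [if_pos rfl]
      ring
    · simp [uvec, h]
  simp only [hterm, sum_add_distrib, sum_ite_eq, mem_univ, if_true]

theorem one_lt_uvec_self_sq {n : ℕ} (m : Fin n → ℝ) (j : Fin n) (hpos : 0 < m j)
    (hnd : m j < ∑ k ∈ univ.erase j, m k) : 1 < uvec m j j ^ 2 := by
  have hc : 1 < ((∑ k, m k) - m j) / m j := by
    rw [lt_div_iff₀ hpos, one_mul, ← sum_erase_eq_sub (mem_univ j)]
    exact hnd
  simp only [uvec, if_true, neg_sq]
  exact one_lt_pow₀ hc two_ne_zero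

theorem exists_pos_combination_uvec_sq_general {n : ℕ} (m : Fin n → ℝ)
    (hpos : ∀ i, 0 < m i)
    (hnd : ∀ j, m j < ∑ k ∈ Finset.univ.erase j, m k) :
    ∃ d : Fin n → ℝ, (∀ i, 0 < d i) ∧
      ∀ j, ∑ i, d i * (uvec m i j) ^ 2 = 1 := by
  obtain ⟨d, hd, hsys⟩ := exists_pos_sum_add_mul_eq_one (fun j => uvec m j j ^ 2 - 1)
    fun j => sub_pos.mpr (one_lt_uvec_self_sq m j (hpos j) (hnd j))
  exact ⟨d, hd, fun j => (sum_mul_uvec_sq m d j).trans (hsys j)⟩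

/-- **Positive combination of the squared vectors `uⁱ` giving the all-ones vector.**
Let `n ≥ 3` and let `m ∈ ℝⁿ` be positive and non-dominating
(`mⱼ < ∑_{k ≠ j} m_k` for every `j`). Then there are positive reals `d′₁, …, d′ₙ`
with `∑ᵢ d′ᵢ (uⁱ ∘ uⁱ) = 1` entrywise, where `uⁱ ∘ uⁱ` is the entrywise square. -/
theorem exists_pos_combination_uvec_sq {n : ℕ} (hn : 3 ≤ n) (m : Fin n → ℝ)
    (hpos : ∀ i, 0 < m i)
    (hnd : ∀ j, m j < ∑ k ∈ Finset.univ.erase j, m k) :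
    ∃ d : Fin n → ℝ, (∀ i, 0 < d i) ∧
      ∀ j, ∑ i, d i * (uvec m i j) ^ 2 = 1 :=
  exists_pos_combination_uvec_sq_general m hpos hnd
end
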